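/- arXiv:2011.03793 — 3 statements merged into one kernel-verified Lean document; each statement's English description precedes it below -/
import Mathlib

section
/- Assume the form [·,·] is indefinite. Let x ∈ H with x ≠ 0 and [x, x] ≠ 0, and let J be a given fundamental symmetry of (H, [·,·]). Then there exists a fundamental symmetry K such that ‖x‖_J < ‖x‖_K. -/
/-!
From `x ≠ 0`, one of `x ± J x` pairs nontrivially with `x` under `[·,·]`, since
`[x + J x, x] - [x - J x, x] = 2 [J x, x] > 0`; together with a vector of the opposite sign supplied
by indefiniteness this gives `ep = J ep`, `em = -J em` with `[ep, ep] = 1`, `[em, em] = -1` and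
`([ep, x], [em, x]) ≠ 0`. Replacing `J` on the plane `span {ep, em}` by `J` composed with a
hyperbolic rotation gives a fundamental symmetry `K` with
`[K x, x] = [J x, x] + (‖a‖² + ‖b‖²) / 12 + 5 / 6 · Re (conj a · b)`, where `a = [ep, x]` and
`b = [em, x]`; changing the sign of `em` if necessary makes the last term nonnegative.
-/

open scoped ComplexOrder

/-- The indefinite (Krein) inner product `[x, y] := ⟪J₀ x, y⟫` induced by the
continuous linear involution `J₀`. -/
noncomputable def kform {H : Type*} [NormedAddCommGroup H] [InnerProductSpace ℂ H]
    (J₀ : H →L[ℂ] H) (x y : H) : ℂ :=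
  inner ℂ (J₀ x) y

/-- `J` is a fundamental symmetry of the Krein space `(H, [·,·])`:
a continuous linear involution, `[·,·]`-selfadjoint, with `[J x, x] > 0` for `x ≠ 0`. -/
def IsFundamentalSymmetry {H : Type*} [NormedAddCommGroup H] [InnerProductSpace ℂ H]
    (J₀ : H →L[ℂ] H) (J : H →L[ℂ] H) : Prop :=
  (∀ x, J (J x) = x) ∧
  (∀ x y, kform J₀ (J x) y = kform J₀ x (J y)) ∧
  (∀ x, x ≠ 0 → 0 < kform J₀ (J x) x)

/-- The `J`-norm `‖x‖_J := [J x, x] ^ (1/2)`. -/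
noncomputable def jnorm {H : Type*} [NormedAddCommGroup H] [InnerProductSpace ℂ H]
    (J₀ : H →L[ℂ] H) (J : H →L[ℂ] H) (x : H) : ℝ :=
  Real.sqrt (kform J₀ (J x) x).re

open scoped ComplexConjugate

section KreinForm

variable {H : Type*} [NormedAddCommGroup H] [InnerProductSpace ℂ H] (J₀ : H →L[ℂ] H)

@[simp] lemma kform_zero_left (v : H) : kform J₀ 0 v = 0 := by simp [kform]

@[simp] lemma kform_add_left (u v w : H) :
    kform J₀ (u + v) w = kform J₀ u w + kform J₀ v w := by
  simp [kform]

@[simp] lemma kform_add_right (u v w : H) :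
    kform J₀ u (v + w) = kform J₀ u v + kform J₀ u w := by
  simp [kform]

@[simp] lemma kform_sub_left (u v w : H) :
    kform J₀ (u - v) w = kform J₀ u w - kform J₀ v w := by
  simp [kform]

@[simp] lemma kform_neg_left (u v : H) : kform J₀ (-u) v = -kform J₀ u v := by
  simp [kform, inner_neg_left]

@[simp] lemma kform_neg_right (u v : H) : kform J₀ u (-v) = -kform J₀ u v := by
  simp [kform, inner_neg_right]

@[simp] lemma kform_smul_left (c : ℂ) (u v : H) :
    kform J₀ (c • u) v = conj c * kform J₀ u v := by
  simp [kform, mul_comm]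

@[simp] lemma kform_smul_right (c : ℂ) (u v : H) :
    kform J₀ u (c • v) = c * kform J₀ u v := by
  simp [kform]

end KreinForm

namespace IsFundamentalSymmetry

variable {H : Type*} [NormedAddCommGroup H] [InnerProductSpace ℂ H] {J₀ J : H →L[ℂ] H}

lemma apply_apply (hJ : IsFundamentalSymmetry J₀ J) (u : H) : J (J u) = u := hJ.1 u

lemma kform_apply_left (hJ : IsFundamentalSymmetry J₀ J) (u v : H) :
    kform J₀ (J u) v = kform J₀ u (J v) := hJ.2.1 u v

lemma kform_apply_self_pos (hJ : IsFundamentalSymmetry J₀ J) {u : H} (hu : u ≠ 0) :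
    0 < kform J₀ (J u) u := hJ.2.2 u hu

lemma re_kform_apply_self_pos (hJ : IsFundamentalSymmetry J₀ J) {u : H} (hu : u ≠ 0) :
    0 < (kform J₀ (J u) u).re := (Complex.pos_iff.1 (hJ.kform_apply_self_pos hu)).1

lemma re_kform_apply_self_nonneg (hJ : IsFundamentalSymmetry J₀ J) (u : H) :
    0 ≤ (kform J₀ (J u) u).re := by
  rcases eq_or_ne u 0 with rfl | hu
  · simp
  · exact (hJ.re_kform_apply_self_pos hu).le

lemma ofReal_re_kform_apply_self (hJ : IsFundamentalSymmetry J₀ J) (u : H) :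
    ((kform J₀ (J u) u).re : ℂ) = kform J₀ (J u) u := by
  rcases eq_or_ne u 0 with rfl | hu
  · simp
  · exact (Complex.eq_re_of_ofReal_le (hJ.kform_apply_self_pos hu).le).symm

/-- The operator `J₀ J` has real diagonal values `⟪J₀ J u, u⟫ = [J u, u]`, hence is symmetric. -/
lemma conj_kform (hJ : IsFundamentalSymmetry J₀ J) (u v : H) :
    conj (kform J₀ u v) = kform J₀ v u := by
  have hT : (J₀ ∘L J : H →ₗ[ℂ] H).IsSymmetric :=
    (LinearMap.isSymmetric_iff_inner_map_self_real _).2 fun w => by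
      change conj (kform J₀ (J w) w) = kform J₀ (J w) w
      rw [← hJ.ofReal_re_kform_apply_self, Complex.conj_ofReal]
  calc conj (kform J₀ u v) = conj (kform J₀ (J u) (J v)) := by
        rw [hJ.kform_apply_left, hJ.apply_apply]
    _ = inner ℂ (J v) (J₀ (J u)) := inner_conj_symm _ _
    _ = inner ℂ (J₀ (J (J v))) u := (hT (J v) u).symm
    _ = kform J₀ v u := by rw [hJ.apply_apply, kform]

lemma kform_eq_zero_of_apply_eq_of_apply_eq_neg (hJ : IsFundamentalSymmetry J₀ J) {p n : H}
    (hp : J p = p) (hn : J n = -n) : kform J₀ p n = 0 := by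
  have h : kform J₀ p n = -kform J₀ p n := by
    conv_lhs => rw [← hp, hJ.kform_apply_left, hn, kform_neg_right]
  exact CharZero.eq_neg_self_iff.1 h

noncomputable abbrev core (hJ : IsFundamentalSymmetry J₀ J) : PreInnerProductSpace.Core ℂ H where
  inner u v := kform J₀ (J u) v
  conj_inner_symm u v := by rw [hJ.conj_kform, hJ.kform_apply_left]
  re_inner_nonneg := hJ.re_kform_apply_self_nonneg
  add_left u v w := by simp
  smul_left u v c := by simp

lemma norm_kform_apply_sq_le (hJ : IsFundamentalSymmetry J₀ J) {e : H}
    (he : kform J₀ (J e) e = 1) (u : H) :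
    ‖kform J₀ (J e) u‖ ^ 2 ≤ (kform J₀ (J u) u).re := by
  have h := InnerProductSpace.Core.inner_mul_inner_self_le (c := hJ.core) e u
  change ‖kform J₀ (J e) u‖ * ‖kform J₀ (J u) e‖
    ≤ (kform J₀ (J e) e).re * (kform J₀ (J u) u).re at h
  have hsymm : kform J₀ (J u) e = conj (kform J₀ (J e) u) := by
    rw [hJ.conj_kform, hJ.kform_apply_left]
  rwa [hsymm, Complex.norm_conj, he, Complex.one_re, one_mul, ← sq] at h

lemma exists_smul_kform_apply_self_eq_one (hJ : IsFundamentalSymmetry J₀ J) {p : H}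
    (hp : p ≠ 0) : ∃ c : ℂ, c ≠ 0 ∧ kform J₀ (J (c • p)) (c • p) = 1 := by
  have hr : 0 < (kform J₀ (J p) p).re := hJ.re_kform_apply_self_pos hp
  refine ⟨((√(kform J₀ (J p) p).re)⁻¹ : ℝ), by simp [(Real.sqrt_pos.2 hr).ne'], ?_⟩
  rw [map_smul, kform_smul_left, kform_smul_right, ← hJ.ofReal_re_kform_apply_self,
    Complex.conj_ofReal]
  norm_cast
  field_simp
  exact (Real.sq_sqrt hr.le).symm

lemma exists_apply_eq_self_of_kform_add_ne_zero (hJ : IsFundamentalSymmetry J₀ J) {u : H}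
    (hu : kform J₀ (u + J u) u ≠ 0) :
    ∃ e, J e = e ∧ kform J₀ e e = 1 ∧ kform J₀ e u ≠ 0 := by
  have hp : J (u + J u) = u + J u := by rw [map_add, hJ.apply_apply, add_comm]
  obtain ⟨c, hc, hce⟩ := hJ.exists_smul_kform_apply_self_eq_one (p := u + J u)
    (by rintro h; simp [h] at hu)
  rw [map_smul, hp] at hce
  refine ⟨c • (u + J u), by rw [map_smul, hp], hce, ?_⟩
  rw [kform_smul_left]
  exact mul_ne_zero (by simpa using hc) hu

lemma exists_apply_eq_neg_of_kform_sub_ne_zero (hJ : IsFundamentalSymmetry J₀ J) {u : H}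
    (hu : kform J₀ (u - J u) u ≠ 0) :
    ∃ e, J e = -e ∧ kform J₀ e e = -1 ∧ kform J₀ e u ≠ 0 := by
  have hn : J (u - J u) = -(u - J u) := by rw [map_sub, hJ.apply_apply, neg_sub]
  obtain ⟨c, hc, hce⟩ := hJ.exists_smul_kform_apply_self_eq_one (p := u - J u)
    (by rintro h; simp [h] at hu)
  rw [map_smul, hn, smul_neg, kform_neg_left, neg_eq_iff_eq_neg] at hce
  refine ⟨c • (u - J u), by rw [map_smul, hn, smul_neg], hce, ?_⟩
  rw [kform_smul_left]
  exact mul_ne_zero (by simpa using hc) hu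

lemma kform_add_ne_zero_or_kform_sub_ne_zero (hJ : IsFundamentalSymmetry J₀ J) {x : H}
    (hx : x ≠ 0) : kform J₀ (x + J x) x ≠ 0 ∨ kform J₀ (x - J x) x ≠ 0 := by
  by_contra! h
  have hJx : kform J₀ (J x) x = 0 := by
    rw [kform_add_left, kform_sub_left] at h
    linear_combination (h.1 - h.2) / 2
  exact (hJ.kform_apply_self_pos hx).ne' hJx

end IsFundamentalSymmetry

section Boost

variable {H : Type*} [NormedAddCommGroup H] [InnerProductSpace ℂ H]

structure IsNormalizedEigenpair (J₀ J : H →L[ℂ] H) (ep em : H) : Prop where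
  apply_fst : J ep = ep
  apply_snd : J em = -em
  kform_fst : kform J₀ ep ep = 1
  kform_snd : kform J₀ em em = -1

/-- In the basis `ep, em` of their span this is `J` times the hyperbolic rotation
`[[c, -s], [-s, c]]` with `(c, s) = (13/12, 5/12)`; on the `[·,·]`-orthogonal complement it
agrees with `J`. The identity `c² - s² = 1` makes it an involution, and `c + s < 2` keeps its
form positive using only the Cauchy–Schwarz bounds `‖[e, u]‖² ≤ [J u, u]` for `e = ep, em`. -/
noncomputable def boost (J₀ J : H →L[ℂ] H) (ep em : H) : H →L[ℂ] H :=
  J + ((1 / 12 : ℂ) • innerSL ℂ (J₀ ep) + (5 / 12 : ℂ) • innerSL ℂ (J₀ em)).smulRight ep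
    + ((5 / 12 : ℂ) • innerSL ℂ (J₀ ep) + (1 / 12 : ℂ) • innerSL ℂ (J₀ em)).smulRight em

lemma boost_apply (J₀ J : H →L[ℂ] H) (ep em u : H) :
    boost J₀ J ep em u = J u + ((kform J₀ ep u + 5 * kform J₀ em u) / 12) • ep
      + ((5 * kform J₀ ep u + kform J₀ em u) / 12) • em := by
  simp only [boost, add_apply, ContinuousLinearMap.smulRight_apply, smul_apply,
    coe_innerSL_apply, smul_eq_mul, kform]
  match_scalars <;> ring

noncomputable def boostGain (a b : ℂ) : ℝ :=
  (‖a‖ ^ 2 + ‖b‖ ^ 2) / 12 + 5 / 6 * (conj a * b).re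

lemma neg_lt_boostGain {a b : ℂ} {g : ℝ} (hg : 0 < g) (ha : ‖a‖ ^ 2 ≤ g) (hb : ‖b‖ ^ 2 ≤ g) :
    -g < boostGain a b := by
  have hre : -(‖a‖ * ‖b‖) ≤ (conj a * b).re := by
    have h := Complex.abs_re_le_norm (conj a * b)
    rw [norm_mul, Complex.norm_conj] at h
    exact (abs_le.1 h).1
  unfold boostGain
  nlinarith [sq_nonneg (‖a‖ - ‖b‖)]

lemma boostGain_pos {a b : ℂ} (hre : 0 ≤ (conj a * b).re) (hab : a ≠ 0 ∨ b ≠ 0) :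
    0 < boostGain a b := by
  have hN : 0 < ‖a‖ ^ 2 + ‖b‖ ^ 2 := by
    rcases hab with h | h <;> have := norm_pos_iff.2 h <;> positivity
  unfold boostGain
  positivity

lemma kform_boost_apply_left {J₀ J : H →L[ℂ] H} (hJ : IsFundamentalSymmetry J₀ J)
    (ep em u v : H) : kform J₀ (boost J₀ J ep em u) v = kform J₀ u (boost J₀ J ep em v) := by
  rw [boost_apply, boost_apply]
  simp only [kform_add_left, kform_add_right, kform_smul_left, kform_smul_right, map_add,
    map_mul, map_div₀, map_ofNat, hJ.kform_apply_left]
  rw [← hJ.conj_kform ep u, ← hJ.conj_kform em u]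
  ring

lemma kform_boost_apply_self (J₀ J : H →L[ℂ] H) (ep em u : H) :
    kform J₀ (boost J₀ J ep em u) u
      = kform J₀ (J u) u + boostGain (kform J₀ ep u) (kform J₀ em u) := by
  rw [boost_apply, kform_add_left, kform_add_left, kform_smul_left, kform_smul_left]
  set a := kform J₀ ep u
  set b := kform J₀ em u
  have hre : ((conj a * b).re : ℂ) = (conj a * b + conj b * a) / 2 := by
    rw [Complex.re_eq_add_conj, map_mul, Complex.conj_conj, mul_comm a]
  simp only [boostGain, map_add, map_mul, map_div₀, map_ofNat]
  push_cast
  rw [hre, ← Complex.conj_mul', ← Complex.conj_mul']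
  ring

lemma jnorm_lt_jnorm_boost {J₀ J : H →L[ℂ] H} {ep em x : H} (hJ : IsFundamentalSymmetry J₀ J)
    (hre : 0 ≤ (conj (kform J₀ ep x) * kform J₀ em x).re)
    (hx : kform J₀ ep x ≠ 0 ∨ kform J₀ em x ≠ 0) :
    jnorm J₀ J x < jnorm J₀ (boost J₀ J ep em) x := by
  rw [jnorm, jnorm, kform_boost_apply_self, Complex.add_re, Complex.ofReal_re]
  exact Real.sqrt_lt_sqrt (hJ.re_kform_apply_self_nonneg x)
    (lt_add_of_pos_right _ (boostGain_pos hre hx))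

namespace IsNormalizedEigenpair

variable {J₀ J : H →L[ℂ] H} {ep em : H}

lemma neg (h : IsNormalizedEigenpair J₀ J ep em) : IsNormalizedEigenpair J₀ J ep (-em) where
  apply_fst := h.apply_fst
  apply_snd := by rw [map_neg, h.apply_snd]
  kform_fst := h.kform_fst
  kform_snd := by rw [kform_neg_left, kform_neg_right, neg_neg, h.kform_snd]

lemma kform_fst_snd (hJ : IsFundamentalSymmetry J₀ J) (h : IsNormalizedEigenpair J₀ J ep em) :
    kform J₀ ep em = 0 :=
  hJ.kform_eq_zero_of_apply_eq_of_apply_eq_neg h.apply_fst h.apply_snd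

lemma kform_snd_fst (hJ : IsFundamentalSymmetry J₀ J) (h : IsNormalizedEigenpair J₀ J ep em) :
    kform J₀ em ep = 0 := by
  rw [← hJ.conj_kform, h.kform_fst_snd hJ, map_zero]

lemma kform_fst_boost (hJ : IsFundamentalSymmetry J₀ J) (h : IsNormalizedEigenpair J₀ J ep em)
    (u : H) :
    kform J₀ ep (boost J₀ J ep em u) = (13 * kform J₀ ep u + 5 * kform J₀ em u) / 12 := by
  rw [boost_apply, kform_add_right, kform_add_right, kform_smul_right, kform_smul_right,
    ← hJ.kform_apply_left, h.apply_fst, h.kform_fst, h.kform_fst_snd hJ]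
  ring

lemma kform_snd_boost (hJ : IsFundamentalSymmetry J₀ J) (h : IsNormalizedEigenpair J₀ J ep em)
    (u : H) :
    kform J₀ em (boost J₀ J ep em u) = -(5 * kform J₀ ep u + 13 * kform J₀ em u) / 12 := by
  rw [boost_apply, kform_add_right, kform_add_right, kform_smul_right, kform_smul_right,
    ← hJ.kform_apply_left, h.apply_snd, kform_neg_left, h.kform_snd, h.kform_snd_fst hJ]
  ring

lemma boost_boost (hJ : IsFundamentalSymmetry J₀ J) (h : IsNormalizedEigenpair J₀ J ep em) (u : H) :
    boost J₀ J ep em (boost J₀ J ep em u) = u := by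
  rw [boost_apply _ _ _ _ (boost J₀ J ep em u), h.kform_fst_boost hJ, h.kform_snd_boost hJ,
    boost_apply, map_add, map_add, map_smul, map_smul, h.apply_fst, h.apply_snd, hJ.apply_apply]
  match_scalars <;> ring

lemma isFundamentalSymmetry_boost (hJ : IsFundamentalSymmetry J₀ J)
    (h : IsNormalizedEigenpair J₀ J ep em) : IsFundamentalSymmetry J₀ (boost J₀ J ep em) := by
  refine ⟨h.boost_boost hJ, kform_boost_apply_left hJ ep em, fun u hu => ?_⟩
  have hep := hJ.norm_kform_apply_sq_le (e := ep) (by rw [h.apply_fst, h.kform_fst]) u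
  have hem := hJ.norm_kform_apply_sq_le (e := em)
    (by rw [h.apply_snd, kform_neg_left, h.kform_snd, neg_neg]) u
  rw [h.apply_fst] at hep
  rw [h.apply_snd, kform_neg_left, norm_neg] at hem
  rw [kform_boost_apply_self, ← hJ.ofReal_re_kform_apply_self, ← Complex.ofReal_add,
    Complex.zero_lt_real]
  linarith [neg_lt_boostGain (hJ.re_kform_apply_self_pos hu) hep hem]

lemma exists_fundamentalSymmetry_jnorm_lt (hJ : IsFundamentalSymmetry J₀ J)
    (h : IsNormalizedEigenpair J₀ J ep em) {x : H} (hx : kform J₀ ep x ≠ 0 ∨ kform J₀ em x ≠ 0) :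
    ∃ K : H →L[ℂ] H, IsFundamentalSymmetry J₀ K ∧ jnorm J₀ J x < jnorm J₀ K x := by
  rcases le_total 0 (conj (kform J₀ ep x) * kform J₀ em x).re with hre | hre
  · exact ⟨_, h.isFundamentalSymmetry_boost hJ, jnorm_lt_jnorm_boost hJ hre hx⟩
  · refine ⟨_, h.neg.isFundamentalSymmetry_boost hJ, jnorm_lt_jnorm_boost hJ ?_ ?_⟩
    · simpa only [kform_neg_left, mul_neg, Complex.neg_re, neg_nonneg] using hre
    · simpa only [kform_neg_left, ne_eq, neg_eq_zero] using hx

end IsNormalizedEigenpair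

end Boost

theorem exists_fundamentalSymmetry_jnorm_lt
    {H : Type*} [NormedAddCommGroup H] [InnerProductSpace ℂ H]
    (J₀ : H →L[ℂ] H)
    (hindef : ∃ u v : H, 0 < kform J₀ u u ∧ kform J₀ v v < 0)
    (x : H) (hx0 : x ≠ 0)
    (J : H →L[ℂ] H) (hJ : IsFundamentalSymmetry J₀ J) :
    ∃ K : H →L[ℂ] H, IsFundamentalSymmetry J₀ K ∧ jnorm J₀ J x < jnorm J₀ K x := by
  obtain ⟨u, v, hu, hv⟩ := hindef
  have hpos : kform J₀ (u + J u) u ≠ 0 := by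
    have hu0 : u ≠ 0 := by rintro rfl; simp at hu
    rw [kform_add_left]
    exact (add_pos hu (hJ.kform_apply_self_pos hu0)).ne'
  have hneg : kform J₀ (v - J v) v ≠ 0 := by
    have hv0 : v ≠ 0 := by rintro rfl; simp at hv
    rw [kform_sub_left]
    exact (sub_neg.2 (hv.trans (hJ.kform_apply_self_pos hv0))).ne
  rcases hJ.kform_add_ne_zero_or_kform_sub_ne_zero hx0 with hx | hx
  · obtain ⟨ep, hep, hpp, hepx⟩ := hJ.exists_apply_eq_self_of_kform_add_ne_zero hx
    obtain ⟨em, hem, hmm, -⟩ := hJ.exists_apply_eq_neg_of_kform_sub_ne_zero hneg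
    exact IsNormalizedEigenpair.exists_fundamentalSymmetry_jnorm_lt hJ ⟨hep, hem, hpp, hmm⟩
      (Or.inl hepx)
  · obtain ⟨ep, hep, hpp, -⟩ := hJ.exists_apply_eq_self_of_kform_add_ne_zero hpos
    obtain ⟨em, hem, hmm, hemx⟩ := hJ.exists_apply_eq_neg_of_kform_sub_ne_zero hx
    exact IsNormalizedEigenpair.exists_fundamentalSymmetry_jnorm_lt hJ ⟨hep, hem, hpp, hmm⟩
      (Or.inr hemx)
end

section
/- Let (x_n) be a sequence of nonzero neutral vectors in H (x_n ≠ 0 and [x_n, x_n] = 0 for all n). Then there exists a sequence (J_n) of fundamental symmetries of (H, [·,·]) such that ‖x_n‖_{J_n} → 0 as n → ∞. -/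
open scoped ComplexOrder

/-!
A neutral vector `z ≠ 0` and `J₀ z` are orthogonal, of equal norm, and span a hyperbolic plane
of `[·,·]`. The boost `B_t` scaling `z` by `t` and `J₀ z` by `t⁻¹` while fixing the orthogonal
complement is `⟪·,·⟫`-selfadjoint and `[·,·]`-unitary, so `J := B_t⁻¹ J₀ B_t` is a fundamental
symmetry with `[J x, x] = ‖B_t x‖²`. Hence `‖z‖_J = t ‖z‖`, which is as small as we like.
-/

section KreinSpace

variable {H : Type*} [NormedAddCommGroup H] [InnerProductSpace ℂ H] {J₀ : H →L[ℂ] H}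

theorem kform_conj_symm (hsa : ∀ x y : H, (inner ℂ (J₀ x) y : ℂ) = inner ℂ x (J₀ y))
    (x y : H) : starRingEnd ℂ (kform J₀ y x) = kform J₀ x y := by
  rw [kform, kform, hsa, inner_conj_symm]

theorem kform_comp_apply (hinv : ∀ x, J₀ (J₀ x) = x)
    {U V : H →L[ℂ] H} (hUV : ∀ x, U (V x) = x)
    (hU : ∀ x y, kform J₀ (U x) (U y) = kform J₀ x y) (x y : H) :
    kform J₀ ((U ∘L J₀ ∘L V) x) y = inner ℂ (V x) (V y) := by
  conv_lhs => rw [← hUV y]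
  rw [ContinuousLinearMap.comp_apply, ContinuousLinearMap.comp_apply, hU, kform, hinv]

theorem isFundamentalSymmetry_comp (hinv : ∀ x, J₀ (J₀ x) = x)
    (hsa : ∀ x y : H, (inner ℂ (J₀ x) y : ℂ) = inner ℂ x (J₀ y))
    {U V : H →L[ℂ] H} (hUV : ∀ x, U (V x) = x) (hVU : ∀ x, V (U x) = x)
    (hU : ∀ x y, kform J₀ (U x) (U y) = kform J₀ x y) :
    IsFundamentalSymmetry J₀ (U ∘L J₀ ∘L V) := by
  refine ⟨fun x => by simp [hVU, hinv, hUV], fun x y => ?_, fun x hx => ?_⟩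
  · rw [← kform_conj_symm hsa x, kform_comp_apply hinv hUV hU, kform_comp_apply hinv hUV hU,
      inner_conj_symm]
  · have hVx : V x ≠ 0 := fun h => hx (by rw [← hUV x, h, map_zero])
    rw [kform_comp_apply hinv hUV hU, inner_self_eq_norm_sq_to_K]
    norm_cast
    exact Complex.zero_lt_real.mpr (pow_pos (norm_pos_iff.mpr hVx) 2)

theorem jnorm_comp (hinv : ∀ x, J₀ (J₀ x) = x)
    {U V : H →L[ℂ] H} (hUV : ∀ x, U (V x) = x)
    (hU : ∀ x y, kform J₀ (U x) (U y) = kform J₀ x y) (x : H) :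
    jnorm J₀ (U ∘L J₀ ∘L V) x = ‖V x‖ := by
  rw [jnorm, kform_comp_apply hinv hUV hU, inner_self_eq_norm_sq_to_K]
  norm_cast
  exact Real.sqrt_sq (norm_nonneg _)

end KreinSpace

section KreinBoost

variable {H : Type*} [NormedAddCommGroup H] [InnerProductSpace ℂ H]

/-- For neutral `z ≠ 0`, this scales `z` by `t` and `J₀ z` by `t⁻¹` and fixes the orthogonal
complement of both. -/
noncomputable def kreinBoost (J₀ : H →L[ℂ] H) (z : H) (t : ℝ) : H →L[ℂ] H :=
  1 + (((t - 1) / ‖z‖ ^ 2 : ℝ) : ℂ) • (innerSL ℂ z).smulRight z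
    + (((t⁻¹ - 1) / ‖z‖ ^ 2 : ℝ) : ℂ) • (innerSL ℂ (J₀ z)).smulRight (J₀ z)

variable {J₀ : H →L[ℂ] H} {z : H} {t : ℝ}

theorem kreinBoost_apply (x : H) :
    kreinBoost J₀ z t x = x + ((((t - 1) / ‖z‖ ^ 2 : ℝ) : ℂ) * inner ℂ z x) • z
      + ((((t⁻¹ - 1) / ‖z‖ ^ 2 : ℝ) : ℂ) * inner ℂ (J₀ z) x) • J₀ z := by
  simp [kreinBoost, mul_smul]

theorem inner_kreinBoost_left (x y : H) :
    inner ℂ (kreinBoost J₀ z t x) y = (inner ℂ x (kreinBoost J₀ z t y) : ℂ) := by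
  simp only [kreinBoost_apply, inner_add_left, inner_add_right, inner_smul_left,
    inner_smul_right, map_mul, Complex.conj_ofReal, inner_conj_symm]
  ring

theorem map_kreinBoost (hinv : ∀ x, J₀ (J₀ x) = x)
    (hsa : ∀ x y : H, (inner ℂ (J₀ x) y : ℂ) = inner ℂ x (J₀ y)) (x : H) :
    J₀ (kreinBoost J₀ z t x) = kreinBoost J₀ z t⁻¹ (J₀ x) := by
  rw [kreinBoost_apply, kreinBoost_apply, inv_inv, ← hsa z, hsa z (J₀ x), hinv]
  simp only [map_add, map_smul, hinv]
  abel

variable (hinv : ∀ x, J₀ (J₀ x) = x)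
    (hsa : ∀ x y : H, (inner ℂ (J₀ x) y : ℂ) = inner ℂ x (J₀ y))
    (hz : z ≠ 0) (hneutral : kform J₀ z z = 0)

include hz hneutral in
theorem kreinBoost_apply_self : kreinBoost J₀ z t z = (t : ℂ) • z := by
  have hN : ‖z‖ ^ 2 ≠ 0 := by positivity
  have hzz : (inner ℂ z z : ℂ) = ((‖z‖ ^ 2 : ℝ) : ℂ) := by
    rw [inner_self_eq_norm_sq_to_K]; norm_cast
  rw [kreinBoost_apply, hzz, show (inner ℂ (J₀ z) z : ℂ) = 0 from hneutral]
  match_scalars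
  · field_simp
    ring
  · simp

include hinv hsa hz hneutral in
theorem kreinBoost_apply_map_self : kreinBoost J₀ z t (J₀ z) = ((t⁻¹ : ℝ) : ℂ) • J₀ z := by
  have h := map_kreinBoost (z := z) (t := t⁻¹) hinv hsa z
  rwa [inv_inv, kreinBoost_apply_self hz hneutral, map_smul, eq_comm] at h

include hz hneutral in
theorem inner_kreinBoost_right_eq_mul (x : H) :
    inner ℂ z (kreinBoost J₀ z t x) = (t * inner ℂ z x : ℂ) := by
  rw [← inner_kreinBoost_left, kreinBoost_apply_self hz hneutral, inner_smul_left,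
    Complex.conj_ofReal]

include hinv hsa hz hneutral in
theorem inner_map_kreinBoost_right_eq_inv_mul (x : H) :
    inner ℂ (J₀ z) (kreinBoost J₀ z t x) = ((t⁻¹ : ℝ) * inner ℂ (J₀ z) x : ℂ) := by
  rw [← inner_kreinBoost_left, kreinBoost_apply_map_self hinv hsa hz hneutral, inner_smul_left,
    Complex.conj_ofReal]

include hinv hsa hz hneutral in
theorem kreinBoost_inv_apply_kreinBoost (ht : t ≠ 0) (x : H) :
    kreinBoost J₀ z t⁻¹ (kreinBoost J₀ z t x) = x := by
  rw [kreinBoost_apply, inner_kreinBoost_right_eq_mul hz hneutral,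
    inner_map_kreinBoost_right_eq_inv_mul hinv hsa hz hneutral, kreinBoost_apply, inv_inv]
  have htC : (t : ℂ) ≠ 0 := by exact_mod_cast ht
  have hN : (‖z‖ : ℂ) ≠ 0 := by exact_mod_cast norm_ne_zero_iff.mpr hz
  match_scalars <;> field_simp <;> ring

include hinv hsa hz hneutral in
theorem kform_kreinBoost (ht : t ≠ 0) (x y : H) :
    kform J₀ (kreinBoost J₀ z t x) (kreinBoost J₀ z t y) = kform J₀ x y := by
  rw [kform, map_kreinBoost hinv hsa, inner_kreinBoost_left,
    kreinBoost_inv_apply_kreinBoost hinv hsa hz hneutral ht, kform]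

end KreinBoost

theorem exists_isFundamentalSymmetry_jnorm_eq {H : Type*} [NormedAddCommGroup H]
    [InnerProductSpace ℂ H] {J₀ : H →L[ℂ] H} (hinv : ∀ x, J₀ (J₀ x) = x)
    (hsa : ∀ x y : H, (inner ℂ (J₀ x) y : ℂ) = inner ℂ x (J₀ y))
    {z : H} (hz : z ≠ 0) (hneutral : kform J₀ z z = 0) {ε : ℝ} (hε : 0 < ε) :
    ∃ J, IsFundamentalSymmetry J₀ J ∧ jnorm J₀ J z = ε := by
  have hz' : 0 < ‖z‖ := norm_pos_iff.mpr hz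
  set t := ε / ‖z‖
  have ht : t ≠ 0 := by positivity
  have hUV := kreinBoost_inv_apply_kreinBoost hinv hsa hz hneutral ht
  have hVU : ∀ x, kreinBoost J₀ z t (kreinBoost J₀ z t⁻¹ x) = x := by
    simpa using kreinBoost_inv_apply_kreinBoost hinv hsa hz hneutral (inv_ne_zero ht)
  have hU := kform_kreinBoost hinv hsa hz hneutral (inv_ne_zero ht)
  refine ⟨_, isFundamentalSymmetry_comp hinv hsa hUV hVU hU, ?_⟩
  rw [jnorm_comp hinv hUV hU, kreinBoost_apply_self hz hneutral, norm_smul, Complex.norm_real,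
    Real.norm_of_nonneg (by positivity), div_mul_cancel₀ _ hz'.ne']

theorem exists_fundamentalSymmetry_seq_jnorm_tendsto_zero_general
    {H : Type*} [NormedAddCommGroup H] [InnerProductSpace ℂ H]
    (J₀ : H →L[ℂ] H)
    (hinv : ∀ x, J₀ (J₀ x) = x)
    (hsa : ∀ x y : H, (inner ℂ (J₀ x) y : ℂ) = inner ℂ x (J₀ y))
    (x : ℕ → H) (hx0 : ∀ n, x n ≠ 0) (hneutral : ∀ n, kform J₀ (x n) (x n) = 0) :
    ∃ J : ℕ → H →L[ℂ] H, (∀ n, IsFundamentalSymmetry J₀ (J n)) ∧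
      Filter.Tendsto (fun n => jnorm J₀ (J n) (x n)) Filter.atTop (nhds 0) := by
  choose J hJ hnorm using fun n : ℕ =>
    exists_isFundamentalSymmetry_jnorm_eq hinv hsa (hx0 n) (hneutral n) Nat.one_div_pos_of_nat
  refine ⟨J, hJ, ?_⟩
  simpa only [hnorm] using tendsto_one_div_add_atTop_nhds_zero_nat

theorem exists_fundamentalSymmetry_seq_jnorm_tendsto_zero
    {H : Type*} [NormedAddCommGroup H] [InnerProductSpace ℂ H] [CompleteSpace H]
    (J₀ : H →L[ℂ] H)
    (hinv : ∀ x, J₀ (J₀ x) = x)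
    (hsa : ∀ x y : H, (inner ℂ (J₀ x) y : ℂ) = inner ℂ x (J₀ y))
    (x : ℕ → H) (hx0 : ∀ n, x n ≠ 0) (hneutral : ∀ n, kform J₀ (x n) (x n) = 0) :
    ∃ J : ℕ → H →L[ℂ] H, (∀ n, IsFundamentalSymmetry J₀ (J n)) ∧
      Filter.Tendsto (fun n => jnorm J₀ (J n) (x n)) Filter.atTop (nhds 0) :=
  exists_fundamentalSymmetry_seq_jnorm_tendsto_zero_general J₀ hinv hsa x hx0 hneutral
end

section
/- Let x, y ∈ H be linearly independent over ℂ and non-orthogonal ([x, y] ≠ 0), and suppose y is neutral ([y, y] = 0). Then there exists a sequence (J_n) of fundamental symmetries of (H, [·,·]) such that ‖y‖_{J_n} / ‖x‖_{J_n} → 0 as n → ∞. -/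
open scoped ComplexOrder

/-!
Normalise the neutral vector, `e := y / ‖y‖`, and put `z := J₀ e`. Neutrality makes `(e, z)` an
orthonormal pair, and `J₀` swaps `e` and `z`. For `s > 0` the operator `G` that multiplies `z` by
`s`, `e` by `s⁻¹` and fixes `{e, z}ᗮ` is positive and satisfies `G J₀ G = J₀`, so `J₀ G` is a
fundamental symmetry with `[J₀ G u, v] = ⟪G u, v⟫`. Its norm shrinks `y` like `s^(-1/2)` and
stretches `x` at least like `s^(1/2) |⟪z, x⟫|`, where `⟪z, x⟫ ≠ 0` is the non-orthogonality
`[x, y] ≠ 0`. Letting `s → ∞` gives the sequence.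
-/

open scoped InnerProductSpace

section Boost

variable {H : Type*} [NormedAddCommGroup H] [InnerProductSpace ℂ H]

/-- On `span {e, z}ᗮ` this is the identity; for orthonormal `e, z` it scales `z` by `s` and `e` by
`s⁻¹`. -/
noncomputable def boostGram (e z : H) (s : ℝ) : H →L[ℂ] H :=
  1 + ((s - 1 : ℝ) : ℂ) • (innerSL ℂ z).smulRight z
    + ((s⁻¹ - 1 : ℝ) : ℂ) • (innerSL ℂ e).smulRight e

variable {e z : H} {s : ℝ}

lemma boostGram_apply (u : H) :
    boostGram e z s u =
      u + ((s - 1 : ℝ) : ℂ) • ⟪z, u⟫_ℂ • z + ((s⁻¹ - 1 : ℝ) : ℂ) • ⟪e, u⟫_ℂ • e := by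
  simp [boostGram]

lemma isSymmetric_boostGram : (boostGram e z s : H →ₗ[ℂ] H).IsSymmetric := by
  intro u v
  simp only [ContinuousLinearMap.coe_coe, boostGram_apply, inner_add_left, inner_add_right,
    inner_smul_left, inner_smul_right, Complex.conj_ofReal, inner_conj_symm]
  ring

lemma inner_boostGram_self (u : H) :
    ⟪boostGram e z s u, u⟫_ℂ =
      ((‖u‖ ^ 2 + (s - 1) * ‖⟪z, u⟫_ℂ‖ ^ 2 + (s⁻¹ - 1) * ‖⟪e, u⟫_ℂ‖ ^ 2 : ℝ) : ℂ) := by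
  simp only [boostGram_apply, inner_add_left, inner_smul_left, Complex.conj_ofReal,
    inner_self_eq_norm_sq_to_K, RCLike.ofReal_eq_complex_ofReal, Complex.conj_mul']
  push_cast
  ring

lemma norm_inner_sq_add_norm_inner_sq_le (hez : Orthonormal ℂ ![e, z]) (u : H) :
    ‖⟪e, u⟫_ℂ‖ ^ 2 + ‖⟪z, u⟫_ℂ‖ ^ 2 ≤ ‖u‖ ^ 2 := by
  simpa [Fin.sum_univ_two] using hez.sum_inner_products_le u (s := Finset.univ)

lemma min_mul_norm_sq_le_re_inner_boostGram_self (hez : Orthonormal ℂ ![e, z])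
    (u : H) : min s s⁻¹ * ‖u‖ ^ 2 ≤ (⟪boostGram e z s u, u⟫_ℂ).re := by
  rw [inner_boostGram_self, Complex.ofReal_re]
  have hbessel := norm_inner_sq_add_norm_inner_sq_le hez u
  have hmin_le_one : min s s⁻¹ ≤ 1 := by
    rcases le_total s 1 with h | h
    · exact (min_le_left _ _).trans h
    · exact (min_le_right _ _).trans (inv_le_one_of_one_le₀ h)
  nlinarith [min_le_left s s⁻¹, min_le_right s s⁻¹, sq_nonneg ‖⟪e, u⟫_ℂ‖,
    sq_nonneg ‖⟪z, u⟫_ℂ‖]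

lemma mul_norm_inner_sq_le_re_inner_boostGram_self (hez : Orthonormal ℂ ![e, z]) (hs : 0 ≤ s)
    (u : H) : s * ‖⟪z, u⟫_ℂ‖ ^ 2 ≤ (⟪boostGram e z s u, u⟫_ℂ).re := by
  rw [inner_boostGram_self, Complex.ofReal_re]
  have hbessel := norm_inner_sq_add_norm_inner_sq_le hez u
  nlinarith [mul_nonneg (inv_nonneg.2 hs) (sq_nonneg ‖⟪e, u⟫_ℂ‖)]

lemma inner_boostGram_left_self (hez : Orthonormal ℂ ![e, z]) :
    ⟪boostGram e z s e, e⟫_ℂ = ((s⁻¹ : ℝ) : ℂ) := by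
  have he : ‖e‖ = 1 := hez.norm_eq_one 0
  have hze : ⟪z, e⟫_ℂ = 0 := hez.inner_eq_zero (i := 1) (j := 0) (by decide)
  have hee : ⟪e, e⟫_ℂ = 1 := inner_self_eq_one_of_norm_eq_one he
  rw [inner_boostGram_self, he, hze, hee, norm_zero, norm_one]
  push_cast
  ring

end Boost

section Krein

variable {H : Type*} [NormedAddCommGroup H] [InnerProductSpace ℂ H] {J₀ : H →L[ℂ] H}

lemma boostGram_apply_apply_boostGram (hsa : ∀ x y : H, ⟪J₀ x, y⟫_ℂ = ⟪x, J₀ y⟫_ℂ) {e z : H}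
    (hez : Orthonormal ℂ ![e, z]) (hJe : J₀ e = z) (hJz : J₀ z = e) {s : ℝ} (hs : s ≠ 0)
    (u : H) : boostGram e z s (J₀ (boostGram e z s u)) = J₀ u := by
  have hee : ⟪e, e⟫_ℂ = 1 := inner_self_eq_one_of_norm_eq_one (hez.norm_eq_one 0)
  have hzz : ⟪z, z⟫_ℂ = 1 := inner_self_eq_one_of_norm_eq_one (hez.norm_eq_one 1)
  have hez' : ⟪e, z⟫_ℂ = 0 := hez.inner_eq_zero (i := 0) (j := 1) (by decide)
  have hze : ⟪z, e⟫_ℂ = 0 := hez.inner_eq_zero (i := 1) (j := 0) (by decide)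
  have hzJ : ⟪z, J₀ u⟫_ℂ = ⟪e, u⟫_ℂ := by rw [← hsa, hJz]
  have heJ : ⟪e, J₀ u⟫_ℂ = ⟪z, u⟫_ℂ := by rw [← hsa, hJe]
  simp only [boostGram_apply, map_add, map_smul, hJe, hJz, hee, hzz, hez', hze, hzJ, heJ]
  push_cast
  match_scalars <;> field_simp <;> ring

lemma orthonormal_pair_apply_of_neutral (hinv : ∀ x, J₀ (J₀ x) = x)
    (hsa : ∀ x y : H, ⟪J₀ x, y⟫_ℂ = ⟪x, J₀ y⟫_ℂ) {e : H} (he : ‖e‖ = 1)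
    (hneutral : kform J₀ e e = 0) : Orthonormal ℂ ![e, J₀ e] := by
  have hJe : ‖J₀ e‖ = 1 := by
    rw [← he, norm_eq_sqrt_re_inner (𝕜 := ℂ), norm_eq_sqrt_re_inner (𝕜 := ℂ) e, hsa, hinv]
  have hperp : ⟪e, J₀ e⟫_ℂ = 0 := by rw [← hsa]; exact hneutral
  simp [he, hJe, hperp]

lemma kform_apply_comp (hinv : ∀ x, J₀ (J₀ x) = x) (G : H →L[ℂ] H) (u v : H) :
    kform J₀ ((J₀ ∘L G) u) v = ⟪G u, v⟫_ℂ := by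
  simp [kform, hinv]

lemma jnorm_comp_s14 (hinv : ∀ x, J₀ (J₀ x) = x) (G : H →L[ℂ] H) (u : H) :
    jnorm J₀ (J₀ ∘L G) u = √(⟪G u, u⟫_ℂ).re := by
  rw [jnorm, kform_apply_comp hinv]

lemma isFundamentalSymmetry_comp_s14 (hinv : ∀ x, J₀ (J₀ x) = x)
    (hsa : ∀ x y : H, ⟪J₀ x, y⟫_ℂ = ⟪x, J₀ y⟫_ℂ) {G : H →L[ℂ] H}
    (hG : (G : H →ₗ[ℂ] H).IsSymmetric) (hpos : ∀ u, u ≠ 0 → 0 < (⟪G u, u⟫_ℂ).re)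
    (hGJG : ∀ u, G (J₀ (G u)) = J₀ u) : IsFundamentalSymmetry J₀ (J₀ ∘L G) := by
  refine ⟨fun u => by simp [hGJG, hinv], fun u v => ?_, fun u hu => ?_⟩
  · rw [kform_apply_comp hinv, kform, hsa, ContinuousLinearMap.comp_apply, hinv]
    exact hG u v
  · have hreal : ((⟪G u, u⟫_ℂ).re : ℂ) = ⟪G u, u⟫_ℂ := hG.coe_re_inner_apply_self u
    rw [kform_apply_comp hinv, ← hreal]
    exact_mod_cast hpos u hu

lemma jnorm_smul (J : H →L[ℂ] H) (c : ℂ) (u : H) :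
    jnorm J₀ J (c • u) = ‖c‖ * jnorm J₀ J u := by
  have hform : (kform J₀ (J (c • u)) (c • u)).re = ‖c‖ ^ 2 * (kform J₀ (J u) u).re := by
    simp only [kform, map_smul, inner_smul_left, inner_smul_right, ← mul_assoc, Complex.mul_conj']
    rw [← Complex.ofReal_pow, Complex.re_ofReal_mul]
  rw [jnorm, jnorm, hform, Real.sqrt_mul (sq_nonneg _), Real.sqrt_sq (norm_nonneg _)]

variable (hinv : ∀ x, J₀ (J₀ x) = x) (hsa : ∀ x y : H, ⟪J₀ x, y⟫_ℂ = ⟪x, J₀ y⟫_ℂ)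
  {e : H} (he : ‖e‖ = 1) (hneutral : kform J₀ e e = 0) {s : ℝ} (hs : 0 < s)
include hinv hsa he hneutral hs

lemma isFundamentalSymmetry_comp_boostGram :
    IsFundamentalSymmetry J₀ (J₀ ∘L boostGram e (J₀ e) s) := by
  have hez := orthonormal_pair_apply_of_neutral hinv hsa he hneutral
  refine isFundamentalSymmetry_comp_s14 hinv hsa isSymmetric_boostGram (fun u hu => ?_)
    (boostGram_apply_apply_boostGram hsa hez rfl (hinv e) hs.ne')
  have hmin : 0 < min s s⁻¹ := lt_min hs (inv_pos.2 hs)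
  exact (mul_pos hmin (by positivity)).trans_le (min_mul_norm_sq_le_re_inner_boostGram_self hez u)

lemma jnorm_comp_boostGram_smul_div_le (c : ℂ) {x : H} (hx : ⟪J₀ e, x⟫_ℂ ≠ 0) :
    jnorm J₀ (J₀ ∘L boostGram e (J₀ e) s) (c • e) / jnorm J₀ (J₀ ∘L boostGram e (J₀ e) s) x ≤
      ‖c‖ / ‖⟪J₀ e, x⟫_ℂ‖ * s⁻¹ := by
  have hez := orthonormal_pair_apply_of_neutral hinv hsa he hneutral
  have hc : 0 < ‖⟪J₀ e, x⟫_ℂ‖ := norm_pos_iff.2 hx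
  rw [jnorm_smul, jnorm_comp_s14 hinv, jnorm_comp_s14 hinv, inner_boostGram_left_self hez,
    Complex.ofReal_re, mul_div_assoc]
  calc ‖c‖ * (√s⁻¹ / √(⟪boostGram e (J₀ e) s x, x⟫_ℂ).re)
      ≤ ‖c‖ * (√s⁻¹ / √(s * ‖⟪J₀ e, x⟫_ℂ‖ ^ 2)) := by
        gcongr
        exact mul_norm_inner_sq_le_re_inner_boostGram_self hez hs.le x
    _ = ‖c‖ / ‖⟪J₀ e, x⟫_ℂ‖ * s⁻¹ := by
        rw [Real.sqrt_inv, Real.sqrt_mul hs.le, Real.sqrt_sq hc.le]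
        field_simp
        rw [Real.sq_sqrt hs.le]

end Krein

theorem exists_fundamentalSymmetry_seq_jnorm_ratio_tendsto_zero_of_neutral_general
    {H : Type*} [NormedAddCommGroup H] [InnerProductSpace ℂ H]
    (J₀ : H →L[ℂ] H)
    (hinv : ∀ x, J₀ (J₀ x) = x)
    (hsa : ∀ x y : H, (inner ℂ (J₀ x) y : ℂ) = inner ℂ x (J₀ y))
    (x y : H)
    (hnonorth : kform J₀ x y ≠ 0) (hy : kform J₀ y y = 0) :
    ∃ J : ℕ → H →L[ℂ] H, (∀ n, IsFundamentalSymmetry J₀ (J n)) ∧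
      Filter.Tendsto (fun n => jnorm J₀ (J n) y / jnorm J₀ (J n) x) Filter.atTop (nhds 0) := by
  have hy0 : y ≠ 0 := by
    rintro rfl
    simp [kform] at hnonorth
  set e : H := (‖y‖⁻¹ : ℂ) • y with he_def
  have he : ‖e‖ = 1 := norm_smul_inv_norm hy0
  have hye : y = (‖y‖ : ℂ) • e := by
    rw [he_def, smul_smul, mul_inv_cancel₀ (by exact_mod_cast norm_ne_zero_iff.2 hy0), one_smul]
  have hneutral : kform J₀ e e = 0 := by
    simp only [kform, he_def, map_smul, inner_smul_left, inner_smul_right]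
    rw [← kform, hy, mul_zero, mul_zero]
  have hx : ⟪J₀ e, x⟫_ℂ ≠ 0 := by
    rw [← inner_conj_symm, ← hsa, map_ne_zero, he_def, inner_smul_right]
    exact mul_ne_zero (by simpa using hy0) hnonorth
  have hlim : Filter.Tendsto (fun n : ℕ => ‖y‖ / ‖⟪J₀ e, x⟫_ℂ‖ * ((n : ℝ) + 1)⁻¹)
      Filter.atTop (nhds 0) := by
    simpa using tendsto_one_div_add_atTop_nhds_zero_nat.const_mul (‖y‖ / ‖⟪J₀ e, x⟫_ℂ‖)
  refine ⟨fun n => J₀ ∘L boostGram e (J₀ e) (n + 1),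
    fun n => isFundamentalSymmetry_comp_boostGram hinv hsa he hneutral n.cast_add_one_pos,
    squeeze_zero (fun n => div_nonneg (Real.sqrt_nonneg _) (Real.sqrt_nonneg _)) (fun n => ?_) hlim⟩
  have hbound := jnorm_comp_boostGram_smul_div_le hinv hsa he hneutral n.cast_add_one_pos
    (‖y‖ : ℂ) hx
  rwa [← hye, Complex.norm_real, norm_norm] at hbound

theorem exists_fundamentalSymmetry_seq_jnorm_ratio_tendsto_zero_of_neutral
    {H : Type*} [NormedAddCommGroup H] [InnerProductSpace ℂ H] [CompleteSpace H]
    (J₀ : H →L[ℂ] H)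
    (hinv : ∀ x, J₀ (J₀ x) = x)
    (hsa : ∀ x y : H, (inner ℂ (J₀ x) y : ℂ) = inner ℂ x (J₀ y))
    (x y : H) (hli : LinearIndependent ℂ ![x, y])
    (hnonorth : kform J₀ x y ≠ 0) (hy : kform J₀ y y = 0) :
    ∃ J : ℕ → H →L[ℂ] H, (∀ n, IsFundamentalSymmetry J₀ (J n)) ∧
      Filter.Tendsto (fun n => jnorm J₀ (J n) y / jnorm J₀ (J n) x) Filter.atTop (nhds 0) :=
  exists_fundamentalSymmetry_seq_jnorm_ratio_tendsto_zero_of_neutral_general J₀ hinv hsa x y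
    hnonorth hy
end
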